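/- Let F and G be disjoint finite sets of integers. For v : F → ℂ and any integer m define the truncated right-hand side R_m(v) = −i m² v_m · 1_{m∈F} + i Σ v_{k₁} · conj(v_{k₂}) · v_{k₃} · conj(v_{k₄}) · v_{k₅}, where the sum runs over all 5-tuples (k₁,…,k₅) ∈ F⁵ with k₁ − k₂ + k₃ − k₄ + k₅ = m (so for m ∈ G only the quintic convolution term is present). Let u' : ℝ → F → ℂ be differentiable and satisfy, for every k ∈ F, the t-model equations: d u'_k/dt = −i k² u'_k + i Σ_{k₁−k₂+k₃−k₄+k₅=k, all kᵢ∈F} u'_{k₁} conj(u'_{k₂}) u'_{k₃} conj(u'_{k₄}) u'_{k₅} + t·[ 3i Σ_{k₁∈G, k₂,…,k₅∈F, k₁−k₂+k₃−k₄+k₅=k} R_{k₁}(u'(t)) conj(u'_{k₂}) u'_{k₃} conj(u'_{k₄}) u'_{k₅} + 2i Σ_{k₂∈G, k₁,k₃,k₄,k₅∈F, k₁−k₂+k₃−k₄+k₅=k} u'_{k₁} conj(R_{k₂}(u'(t))) u'_{k₃} conj(u'_{k₄}) u'_{k₅} ]. Then the resolved mass M_F(t) = Σ_{k∈F} |u'_k(t)|²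 is differentiable and satisfies, for every t ∈ ℝ, d M_F(t)/dt = −2t · Σ_{k∈G} |R_k(u'(t))|². -/

import Mathlib

/-!
The mass derivative is `2 Re Σ_{k ∈ F} conj (u'_k) · RHS_k`. Every term of this pairing is a sum
over sextuples `(k₁, …, k₅, k)` with `k₁ - k₂ + k₃ - k₄ + k₅ = k`, and a cyclic shift of the six
slots moves `k` into the convolution. Thus the resolved quintic pairing equals its own conjugate,
so it and the dispersive term, both multiplied by `i`, contribute nothing to the real part. The
two memory terms turn into `Σ_{m ∈ G} R_m conj (Q_m)` and its conjugate, `Q_m` being the resolved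
quintic sum; since `R_m = i Q_m` for `m ∉ F`, these are `± i Σ_{m ∈ G} |R_m|²`, and
`3i · i + 2i · (-i) = -1`.
-/

open Finset

/-- The set of 5-tuples `(k₁,k₂,k₃,k₄,k₅) ∈ A × B × C × D × E` with
`k₁ - k₂ + k₃ - k₄ + k₅ = k`. -/
def mixedQuintuples (A B C D E : Finset ℤ) (k : ℤ) : Finset (ℤ × ℤ × ℤ × ℤ × ℤ) :=
  (A ×ˢ B ×ˢ C ×ˢ D ×ˢ E).filter
    (fun p => p.1 - p.2.1 + p.2.2.1 - p.2.2.2.1 + p.2.2.2.2 = k)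

/-- The truncated right-hand side of the Fourier-Galerkin 1D critical focusing NLS:
`R_m(v) = -i m² v_m · 1_{m ∈ F} + i Σ_{k₁-k₂+k₃-k₄+k₅ = m, kᵢ ∈ F}
v_{k₁} conj(v_{k₂}) v_{k₃} conj(v_{k₄}) v_{k₅}`. -/
noncomputable def truncRHS (F : Finset ℤ) (v : ℤ → ℂ) (m : ℤ) : ℂ :=
  (if m ∈ F then -Complex.I * (m : ℂ) ^ 2 * v m else 0)
    + Complex.I * ∑ p ∈ mixedQuintuples F F F F F m,
        v p.1 * (starRingEnd ℂ) (v p.2.1) * v p.2.2.1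
          * (starRingEnd ℂ) (v p.2.2.2.1) * v p.2.2.2.2

/-- The right-hand side of the `t`-model equation for a resolved mode `k ∈ F`. -/
noncomputable def tModelRHS (F G : Finset ℤ) (v : ℤ → ℂ) (t : ℝ) (k : ℤ) : ℂ :=
  -Complex.I * (k : ℂ) ^ 2 * v k
    + Complex.I * ∑ p ∈ mixedQuintuples F F F F F k,
        v p.1 * (starRingEnd ℂ) (v p.2.1) * v p.2.2.1
          * (starRingEnd ℂ) (v p.2.2.2.1) * v p.2.2.2.2
    + (t : ℂ) *
      (3 * Complex.I * ∑ p ∈ mixedQuintuples G F F F F k,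
          truncRHS F v p.1 * (starRingEnd ℂ) (v p.2.1) * v p.2.2.1
            * (starRingEnd ℂ) (v p.2.2.2.1) * v p.2.2.2.2
        + 2 * Complex.I * ∑ p ∈ mixedQuintuples F G F F F k,
            v p.1 * (starRingEnd ℂ) (truncRHS F v p.2.1) * v p.2.2.1
              * (starRingEnd ℂ) (v p.2.2.2.1) * v p.2.2.2.2)

open ComplexConjugate

section Quintic

variable {R : Type*} [CommSemiring R] [StarRing R]

def quinticConv (A B C D E : Finset ℤ) (f₁ f₂ f₃ f₄ f₅ : ℤ → R) (k : ℤ) : R :=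
  ∑ p ∈ mixedQuintuples A B C D E k,
    f₁ p.1 * conj (f₂ p.2.1) * f₃ p.2.2.1 * conj (f₄ p.2.2.2.1) * f₅ p.2.2.2.2

theorem mem_mixedQuintuples {A B C D E : Finset ℤ} {k : ℤ} {p : ℤ × ℤ × ℤ × ℤ × ℤ} :
    p ∈ mixedQuintuples A B C D E k ↔
      p.1 ∈ A ∧ p.2.1 ∈ B ∧ p.2.2.1 ∈ C ∧ p.2.2.2.1 ∈ D ∧ p.2.2.2.2 ∈ E ∧
        p.1 - p.2.1 + p.2.2.1 - p.2.2.2.1 + p.2.2.2.2 = k := by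
  simp [mixedQuintuples, and_assoc]

theorem sum_conj_mul_quinticConv (A B C D E K : Finset ℤ) (f₁ f₂ f₃ f₄ f₅ g : ℤ → R) :
    ∑ k ∈ K, conj (g k) * quinticConv A B C D E f₁ f₂ f₃ f₄ f₅ k
      = ∑ m ∈ A, f₁ m * conj (quinticConv B C D E K f₂ f₃ f₄ f₅ g m) := by
  simp only [quinticConv, mul_sum, map_sum, map_mul, starRingEnd_self_apply]
  rw [sum_sigma', sum_sigma']
  refine sum_nbij' (fun q => ⟨q.2.1, (q.2.2.1, q.2.2.2.1, q.2.2.2.2.1, q.2.2.2.2.2, q.1)⟩)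
    (fun q => ⟨q.2.2.2.2.2, (q.1, q.2.1, q.2.2.1, q.2.2.2.1, q.2.2.2.2.1)⟩) ?_ ?_ ?_ ?_ ?_
  · rintro ⟨k, k₁, k₂, k₃, k₄, k₅⟩ hq
    simp only [mem_sigma, mem_mixedQuintuples] at hq ⊢
    obtain ⟨hk, h₁, h₂, h₃, h₄, h₅, hsum⟩ := hq
    exact ⟨h₁, h₂, h₃, h₄, h₅, hk, by omega⟩
  · rintro ⟨m, k₂, k₃, k₄, k₅, k⟩ hq
    simp only [mem_sigma, mem_mixedQuintuples] at hq ⊢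
    obtain ⟨hm, h₂, h₃, h₄, h₅, hk, hsum⟩ := hq
    exact ⟨hk, hm, h₂, h₃, h₄, h₅, by omega⟩
  · intro _ _; rfl
  · intro _ _; rfl
  · intro _ _; ring

theorem conj_sum_conj_mul_quinticConv_self (K : Finset ℤ) (f : ℤ → R) :
    conj (∑ k ∈ K, conj (f k) * quinticConv K K K K K f f f f f k)
      = ∑ k ∈ K, conj (f k) * quinticConv K K K K K f f f f f k := by
  conv_rhs => rw [sum_conj_mul_quinticConv]
  simp only [map_sum, map_mul, starRingEnd_self_apply]

end Quintic

section TModel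

open Complex

variable (F G : Finset ℤ) (v : ℤ → ℂ)

theorem truncRHS_eq_quinticConv (m : ℤ) :
    truncRHS F v m = (if m ∈ F then -I * (m : ℂ) ^ 2 * v m else 0)
      + I * quinticConv F F F F F v v v v v m := rfl

theorem tModelRHS_eq_quinticConv (t : ℝ) (k : ℤ) :
    tModelRHS F G v t k = -I * (k : ℂ) ^ 2 * v k + I * quinticConv F F F F F v v v v v k
      + t * (3 * I * quinticConv G F F F F (truncRHS F v) v v v v k
        + 2 * I * quinticConv F G F F F v (truncRHS F v) v v v k) := rfl

theorem truncRHS_of_notMem {m : ℤ} (hm : m ∉ F) :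
    truncRHS F v m = I * quinticConv F F F F F v v v v v m := by
  rw [truncRHS_eq_quinticConv, if_neg hm, zero_add]

variable {F G}

theorem sum_conj_mul_quinticConv_truncRHS_left (hFG : Disjoint F G) :
    ∑ k ∈ F, conj (v k) * quinticConv G F F F F (truncRHS F v) v v v v k
      = I * ((∑ m ∈ G, ‖truncRHS F v m‖ ^ 2 : ℝ) : ℂ) := by
  rw [sum_conj_mul_quinticConv, ofReal_sum, mul_sum]
  refine sum_congr rfl fun m hm => ?_
  rw [truncRHS_of_notMem F v (disjoint_right.mp hFG hm), norm_mul, norm_I, one_mul, ofReal_pow,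
    ← mul_conj', mul_assoc]

theorem sum_conj_mul_quinticConv_truncRHS_right (hFG : Disjoint F G) :
    ∑ k ∈ F, conj (v k) * quinticConv F G F F F v (truncRHS F v) v v v k
      = -I * ((∑ m ∈ G, ‖truncRHS F v m‖ ^ 2 : ℝ) : ℂ) := by
  rw [sum_conj_mul_quinticConv]
  simpa only [map_sum, map_mul, conj_conj, conj_I, conj_ofReal] using
    congrArg conj (sum_conj_mul_quinticConv_truncRHS_left v hFG)

theorem re_sum_conj_mul_tModelRHS (hFG : Disjoint F G) (t : ℝ) :
    (∑ k ∈ F, conj (v k) * tModelRHS F G v t k).re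
      = -t * ∑ m ∈ G, ‖truncRHS F v m‖ ^ 2 := by
  have hdispersive : ∑ k ∈ F, conj (v k) * ((k : ℂ) ^ 2 * v k)
      = ((∑ k ∈ F, (k : ℝ) ^ 2 * ‖v k‖ ^ 2 : ℝ) : ℂ) := by
    push_cast
    refine sum_congr rfl fun k _ => ?_
    rw [← conj_mul']
    ring
  have hquintic := conj_eq_iff_im.mp (conj_sum_conj_mul_quinticConv_self F v)
  have hsplit : ∑ k ∈ F, conj (v k) * tModelRHS F G v t k
      = -I * ∑ k ∈ F, conj (v k) * ((k : ℂ) ^ 2 * v k)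
        + I * ∑ k ∈ F, conj (v k) * quinticConv F F F F F v v v v v k
        + t * (3 * I * ∑ k ∈ F, conj (v k) * quinticConv G F F F F (truncRHS F v) v v v v k
          + 2 * I * ∑ k ∈ F, conj (v k) * quinticConv F G F F F v (truncRHS F v) v v v k) := by
    simp only [tModelRHS_eq_quinticConv, mul_sum, ← sum_add_distrib]
    exact sum_congr rfl fun k _ => by ring
  rw [hsplit, hdispersive, sum_conj_mul_quinticConv_truncRHS_left v hFG,
    sum_conj_mul_quinticConv_truncRHS_right v hFG]
  simp only [add_re, mul_re, mul_im, neg_re, neg_im, I_re, I_im, ofReal_re, ofReal_im,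
    re_ofNat, im_ofNat, hquintic]
  ring

end TModel

/-- Mass dissipation identity for the `t`-model of the Fourier-truncated 1D critical
focusing NLS: `d M_F(t)/dt = -2t Σ_{k ∈ G} |R_k(u'(t))|²`. -/
theorem tmodel_mass_dissipation
    (F G : Finset ℤ) (hdisj : Disjoint F G) (u' : ℝ → ℤ → ℂ)
    (hode : ∀ k ∈ F, ∀ t : ℝ,
      HasDerivAt (fun s => u' s k) (tModelRHS F G (u' t) t k) t) :
    ∀ t : ℝ,
      HasDerivAt (fun s => ∑ k ∈ F, ‖u' s k‖ ^ 2)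
        (-2 * t * ∑ k ∈ G, ‖truncRHS F (u' t) k‖ ^ 2) t := by
  intro t
  refine (HasDerivAt.fun_sum fun k hk => (hode k hk t).norm_sq).congr_deriv ?_
  simp_rw [← mul_sum, Complex.inner, mul_comm (tModelRHS _ _ _ _ _)]
  rw [← Complex.re_sum, re_sum_conj_mul_tModelRHS _ hdisj]
  ring
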